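/- Fix N ≥ 2, d ≥ 1, and ε ≥ 0. On the canonical space (ℝ^d)^N with coordinate process S_1,…,S_N and natural filtration, let M_ε(𝛍) denote the set of probability measures P with marginals P ∘ S_k^{-1} = μ_k for k = 1,…,N and satisfying E_P[|E_P[S_{k+1} | F_k] − S_k|] ≤ ε for k = 1,…,N−1, where 𝛍 = (μ_1,…,μ_N) is a vector of probability measures on ℝ^d with finite first moments. Then M_ε(𝛍) is convex, and it is compact with respect to the topology of weak convergence. -/

import Mathlib

open MeasureTheory Filter
open scoped ENNReal

noncomputable section

abbrev Vec (d : ℕ) := Fin d → ℝ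
abbrev Traj (N d : ℕ) := Fin N → Vec d

def l1 {d : ℕ} (x : Vec d) : ℝ := ∑ i, |x i|

def trajDist {N d : ℕ} (ω ω' : Traj N d) : ℝ := ∑ k, l1 (ω k - ω' k)

def Coupling {E : Type*} [MeasurableSpace E] (μ ν : Measure E) : Set (Measure (E × E)) :=
  {P | P.map Prod.fst = μ ∧ P.map Prod.snd = ν}

def W1 {d : ℕ} (μ ν : Measure (Vec d)) : ℝ≥0∞ :=
  ⨅ P ∈ Coupling μ ν, ∫⁻ p, ENNReal.ofReal (l1 (p.1 - p.2)) ∂P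

def WSum {N d : ℕ} (μs νs : Fin N → Measure (Vec d)) : ℝ≥0∞ :=
  ∑ k, W1 (μs k) (νs k)

def WTraj {N d : ℕ} (P Q : Measure (Traj N d)) : ℝ≥0∞ :=
  ⨅ R ∈ Coupling P Q, ∫⁻ p, ENNReal.ofReal (trajDist p.1 p.2) ∂ R

def IsApproxMart {N d : ℕ} (ε : ℝ) (μs : Fin N → Measure (Vec d))
    (P : Measure (Traj N d)) : Prop :=
  IsProbabilityMeasure P ∧
  (∀ k : Fin N, P.map (fun ω => ω k) = μs k) ∧
  ∀ (k : ℕ) (hk : k + 1 < N),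
    ∀ h : BoundedContinuousFunction (Fin (k+1) → Vec d) (Vec d),
      ∫ ω, ∑ i, h (fun j => ω ⟨j.1, Nat.lt_trans j.2 hk⟩) i *
        (ω ⟨k+1, hk⟩ i - ω ⟨k, Nat.lt_of_succ_lt hk⟩ i) ∂P ≤ ε * ‖h‖

def Pval {N d : ℕ} (ε : ℝ) (μs : Fin N → Measure (Vec d))
    (c : Traj N d → ℝ) : ℝ :=
  sSup {x | ∃ P, IsApproxMart ε μs P ∧ x = ∫ ω, c ω ∂P}

/-! Convexity is immediate, since every constraint defining `IsApproxMart` is affine in `P`.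
For compactness, fixing the marginals makes the set tight (a single finite measure on a Polish
space is tight), so by Prokhorov it suffices to show that it is closed. The marginal constraints
are closed because push-forward is continuous. The integrand of a martingale constraint is
continuous but unbounded; it is dominated by `∑ j, ‖h‖ * l1 (ω j)`, so under the fixed marginals
the integrals of its truncations converge to its integral uniformly. Hence its integral is
continuous on the marginal constraint set, and the constraint is closed there. -/

open Set Topology

lemma abs_max_neg_min_le {c : ℝ} (hc : 0 ≤ c) (x : ℝ) : |max (-c) (min c x)| ≤ c := by
  grind [abs_le]

lemma abs_sub_max_neg_min_le (c x : ℝ) : |x - max (-c) (min c x)| ≤ max (|x| - c) 0 := by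
  grind [abs_le]

lemma max_sum_sub_card_mul_le {ι : Type*} [Fintype ι] (a : ι → ℝ) (R : ℝ) :
    max (∑ i, a i - Fintype.card ι * R) 0 ≤ ∑ i, max (a i - R) 0 := by
  refine max_le ?_ (Finset.sum_nonneg fun i _ => le_max_right _ _)
  calc ∑ i, a i - Fintype.card ι * R = ∑ i, (a i - R) := by simp [Finset.sum_sub_distrib]
    _ ≤ ∑ i, max (a i - R) 0 := Finset.sum_le_sum fun i _ => le_max_left _ _

lemma tendsto_integral_max_sub_zero_atTop {X : Type*} [MeasurableSpace X] {μ : Measure X}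
    {φ : X → ℝ} (hφ : Integrable φ μ) :
    Tendsto (fun R : ℝ => ∫ x, max (φ x - R) 0 ∂μ) atTop (𝓝 0) := by
  have hlim := tendsto_integral_filter_of_dominated_convergence (l := atTop) (μ := μ)
    (F := fun (R : ℝ) x => max (φ x - R) 0) (f := fun _ => (0 : ℝ)) (fun x => |φ x|)
    (Eventually.of_forall fun R => by fun_prop) ?_ hφ.abs ?_
  · simpa using hlim
  · filter_upwards [eventually_ge_atTop 0] with R hR
    refine Eventually.of_forall fun x => ?_
    rw [Real.norm_eq_abs, abs_of_nonneg (le_max_right _ _)]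
    exact max_le (by linarith [le_abs_self (φ x)]) (abs_nonneg _)
  · refine Eventually.of_forall fun x => tendsto_const_nhds.congr' ?_
    filter_upwards [eventually_ge_atTop (φ x)] with R hR
    rw [max_eq_right (by linarith)]

lemma isClosed_setOf_map_eq {X Y : Type*} [TopologicalSpace X] [MeasurableSpace X]
    [OpensMeasurableSpace X] [TopologicalSpace Y] [MeasurableSpace Y] [HasOuterApproxClosed Y]
    [BorelSpace Y] {f : X → Y} (hf : Continuous f) (ν : ProbabilityMeasure Y) :
    IsClosed {P : ProbabilityMeasure X | P.toMeasure.map f = ν} := by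
  convert isClosed_singleton.preimage (ProbabilityMeasure.continuous_map hf) using 1
  ext P
  rw [mem_preimage, mem_singleton_iff, ← ProbabilityMeasure.toMeasure_injective.eq_iff,
    ProbabilityMeasure.toMeasure_map]
  rfl

section Marginals

variable {ι X : Type*} [Fintype ι] [MeasurableSpace X]

lemma isTightMeasureSet_of_forall_map_eval [TopologicalSpace X] {S : Set (Measure (ι → X))}
    (hS : ∀ i, IsTightMeasureSet (Measure.map (fun ω => ω i) '' S)) : IsTightMeasureSet S := by
  simp only [isTightMeasureSet_iff_exists_isCompact_measure_compl_le] at hS ⊢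
  intro δ hδ
  choose K hK hKS using fun i =>
    hS i (δ / Fintype.card ι) (ENNReal.div_pos hδ.ne' (ENNReal.natCast_ne_top _))
  refine ⟨univ.pi K, isCompact_univ_pi hK, fun P hP => ?_⟩
  have hcompl : (univ.pi K)ᶜ = ⋃ i, (fun ω : ι → X => ω i) ⁻¹' (K i)ᶜ := by
    ext ω; simp
  calc P (univ.pi K)ᶜ ≤ ∑ i, P ((fun ω : ι → X => ω i) ⁻¹' (K i)ᶜ) := by
        rw [hcompl]; exact measure_iUnion_fintype_le P _
    _ ≤ ∑ _i : ι, δ / Fintype.card ι := by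
        gcongr with i
        exact (Measure.le_map_apply (measurable_pi_apply i).aemeasurable _).trans
          (hKS i _ (mem_image_of_mem _ hP))
    _ ≤ δ := by simpa using ENNReal.mul_div_le

variable {μ : ι → Measure X} {φ : ι → X → ℝ} {f : (ι → X) → ℝ} {P : Measure (ι → X)}

lemma integrable_of_abs_le_sum_eval (hP : ∀ i, P.map (fun ω => ω i) = μ i)
    (hφ : ∀ i, Integrable (φ i) (μ i)) (hf : AEStronglyMeasurable f P)
    (hfφ : ∀ ω, |f ω| ≤ ∑ i, φ i (ω i)) :
    Integrable f P := by
  have hφP : ∀ i, Integrable (fun ω : ι → X => φ i (ω i)) P := fun i =>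
    ((hP i).symm ▸ hφ i).comp_aemeasurable (measurable_pi_apply i).aemeasurable
  exact (integrable_finsetSum _ fun i _ => hφP i).mono' hf (Eventually.of_forall hfφ)

lemma abs_integral_sub_integral_truncation_le [IsProbabilityMeasure P]
    (hP : ∀ i, P.map (fun ω => ω i) = μ i) (hφ : ∀ i, Integrable (φ i) (μ i))
    (hf : AEStronglyMeasurable f P) (hfφ : ∀ ω, |f ω| ≤ ∑ i, φ i (ω i)) {R : ℝ} (hR : 0 ≤ R) :
    |∫ ω, f ω ∂P - ∫ ω, max (-(Fintype.card ι * R)) (min (Fintype.card ι * R) (f ω)) ∂P| ≤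
      ∑ i, ∫ x, max (φ i x - R) 0 ∂(μ i) := by
  set c : ℝ := Fintype.card ι * R
  have hμ : ∀ i, IsProbabilityMeasure (μ i) := fun i =>
    hP i ▸ Measure.isProbabilityMeasure_map (measurable_pi_apply i).aemeasurable
  have htail : ∀ i, Integrable (fun x => max (φ i x - R) 0) (μ i) := fun i =>
    ((hφ i).sub (integrable_const R)).pos_part
  have htailP : ∀ i, Integrable (fun ω : ι → X => max (φ i (ω i) - R) 0) P := fun i =>
    ((hP i).symm ▸ htail i).comp_aemeasurable (measurable_pi_apply i).aemeasurable
  have hfP : Integrable f P := integrable_of_abs_le_sum_eval hP hφ hf hfφ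
  have hclip : Integrable (fun ω => max (-c) (min c (f ω))) P :=
    (integrable_const c).mono' (by fun_prop)
      (Eventually.of_forall fun ω => abs_max_neg_min_le (by positivity) _)
  calc |∫ ω, f ω ∂P - ∫ ω, max (-c) (min c (f ω)) ∂P|
      = |∫ ω, (f ω - max (-c) (min c (f ω))) ∂P| := by rw [integral_sub hfP hclip]
    _ ≤ ∫ ω, |f ω - max (-c) (min c (f ω))| ∂P := abs_integral_le_integral_abs
    _ ≤ ∫ ω, ∑ i, max (φ i (ω i) - R) 0 ∂P := by
        refine integral_mono (hfP.sub hclip).abs (integrable_finsetSum _ fun i _ => htailP i)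
          fun ω => ?_
        calc |f ω - max (-c) (min c (f ω))| ≤ max (|f ω| - c) 0 := abs_sub_max_neg_min_le _ _
          _ ≤ max (∑ i, φ i (ω i) - c) 0 := by gcongr; exact hfφ ω
          _ ≤ _ := max_sum_sub_card_mul_le _ _
    _ = ∑ i, ∫ x, max (φ i x - R) 0 ∂(μ i) := by
        rw [integral_finsetSum _ fun i _ => htailP i]
        refine Finset.sum_congr rfl fun i _ => ?_
        rw [← hP i, integral_map (measurable_pi_apply i).aemeasurable
          (by rw [hP i]; exact (htail i).aestronglyMeasurable)]

lemma continuousOn_integral_of_abs_le_sum_eval [TopologicalSpace X] [SecondCountableTopology X]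
    [OpensMeasurableSpace X] (hφ : ∀ i, Integrable (φ i) (μ i)) (hf : Continuous f)
    (hfφ : ∀ ω, |f ω| ≤ ∑ i, φ i (ω i)) :
    ContinuousOn (fun P : ProbabilityMeasure (ι → X) => ∫ ω, f ω ∂P)
      {P | ∀ i, P.toMeasure.map (fun ω => ω i) = μ i} := by
  set c : ℝ → ℝ := fun R => Fintype.card ι * R
  refine TendstoUniformlyOn.continuousOn (p := atTop)
    (F := fun R (P : ProbabilityMeasure (ι → X)) => ∫ ω, max (-c R) (min (c R) (f ω)) ∂P) ?_ ?_
  · have htail : Tendsto (fun R => ∑ i, ∫ x, max (φ i x - R) 0 ∂(μ i)) atTop (𝓝 0) := by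
      simpa using tendsto_finsetSum Finset.univ fun i _ =>
        tendsto_integral_max_sub_zero_atTop (hφ i)
    rw [Metric.tendstoUniformlyOn_iff]
    intro δ hδ
    filter_upwards [eventually_ge_atTop 0, htail.eventually_lt_const hδ] with R hR hRδ P hP
    rw [Real.dist_eq]
    exact (abs_integral_sub_integral_truncation_le hP hφ hf.aestronglyMeasurable hfφ hR).trans_lt
      hRδ
  · refine (eventually_ge_atTop 0).frequently.mono fun R hR => ?_
    have hcR : 0 ≤ c R := by positivity
    exact (ProbabilityMeasure.continuous_integral_boundedContinuousFunction
      (BoundedContinuousFunction.ofNormedAddCommGroup _ (by fun_prop) (c R)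
        fun ω => abs_max_neg_min_le hcR (f ω))).continuousOn

end Marginals

section ApproxMart

variable {N d : ℕ}

lemma l1_nonneg (x : Vec d) : 0 ≤ l1 x :=
  Finset.sum_nonneg fun _ _ => abs_nonneg _

def martTestIntegrand (k : ℕ) (hk : k + 1 < N)
    (h : BoundedContinuousFunction (Fin (k+1) → Vec d) (Vec d)) (ω : Traj N d) : ℝ :=
  ∑ i, h (fun j => ω ⟨j.1, Nat.lt_trans j.2 hk⟩) i *
    (ω ⟨k+1, hk⟩ i - ω ⟨k, Nat.lt_of_succ_lt hk⟩ i)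

lemma isApproxMart_iff {ε : ℝ} {μs : Fin N → Measure (Vec d)} {P : Measure (Traj N d)} :
    IsApproxMart ε μs P ↔ IsProbabilityMeasure P ∧ (∀ k, P.map (fun ω => ω k) = μs k) ∧
      ∀ k hk h, ∫ ω, martTestIntegrand k hk h ω ∂P ≤ ε * ‖h‖ :=
  Iff.rfl

variable {k : ℕ} {hk : k + 1 < N} {h : BoundedContinuousFunction (Fin (k+1) → Vec d) (Vec d)}

lemma continuous_martTestIntegrand : Continuous (martTestIntegrand k hk h) := by
  unfold martTestIntegrand; fun_prop

lemma abs_martTestIntegrand_le (ω : Traj N d) :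
    |martTestIntegrand k hk h ω| ≤ ∑ j, ‖h‖ * l1 (ω j) := by
  set x : Fin (k+1) → Vec d := fun j => ω ⟨j.1, Nat.lt_trans j.2 hk⟩
  set a : Fin N := ⟨k+1, hk⟩
  set b : Fin N := ⟨k, Nat.lt_of_succ_lt hk⟩
  have hab : a ≠ b := by simp [a, b, Fin.ext_iff]
  have hx : ∀ i, |h x i| ≤ ‖h‖ := fun i =>
    (norm_le_pi_norm (h x) i).trans (h.norm_coe_le_norm x)
  calc |martTestIntegrand k hk h ω| ≤ ∑ i, |h x i| * |ω a i - ω b i| :=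
        (Finset.abs_sum_le_sum_abs (fun i => h x i * (ω a i - ω b i)) Finset.univ).trans_eq
          (by simp only [abs_mul])
    _ ≤ ∑ i, ‖h‖ * (|ω a i| + |ω b i|) :=
        Finset.sum_le_sum fun i _ =>
          mul_le_mul (hx i) (abs_sub _ _) (abs_nonneg _) (norm_nonneg h)
    _ = ∑ j ∈ {a, b}, ‖h‖ * l1 (ω j) := by
        simp [Finset.sum_pair hab, l1, Finset.mul_sum, Finset.sum_add_distrib, mul_add]
    _ ≤ ∑ j, ‖h‖ * l1 (ω j) :=
        Finset.sum_le_sum_of_subset_of_nonneg (Finset.subset_univ _)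
          fun j _ _ => mul_nonneg (norm_nonneg h) (l1_nonneg _)

variable {μs : Fin N → Measure (Vec d)}

lemma integrable_martTestIntegrand (hmom : ∀ k, Integrable (fun x : Vec d => l1 x) (μs k))
    {P : Measure (Traj N d)} (hP : ∀ k, P.map (fun ω => ω k) = μs k) :
    Integrable (martTestIntegrand k hk h) P :=
  integrable_of_abs_le_sum_eval hP (fun j => (hmom j).const_mul ‖h‖)
    continuous_martTestIntegrand.aestronglyMeasurable abs_martTestIntegrand_le

lemma IsApproxMart.smul_add_smul {ε : ℝ} (hmom : ∀ k, Integrable (fun x : Vec d => l1 x) (μs k))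
    {P Q : Measure (Traj N d)} (hP : IsApproxMart ε μs P) (hQ : IsApproxMart ε μs Q) {a : ℝ}
    (ha : a ∈ Icc (0 : ℝ) 1) :
    IsApproxMart ε μs (ENNReal.ofReal a • P + ENNReal.ofReal (1 - a) • Q) := by
  obtain ⟨_, hPmarg, hPmart⟩ := hP
  obtain ⟨_, hQmarg, hQmart⟩ := hQ
  have hb : 0 ≤ 1 - a := sub_nonneg.mpr ha.2
  have hsum : ENNReal.ofReal a + ENNReal.ofReal (1 - a) = 1 := by
    rw [← ENNReal.ofReal_add ha.1 hb, add_sub_cancel, ENNReal.ofReal_one]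
  refine isApproxMart_iff.mpr ⟨⟨by simp [hsum]⟩, fun k => ?_, fun k hk h => ?_⟩
  · rw [Measure.map_add _ _ (measurable_pi_apply k), Measure.map_smul, Measure.map_smul,
      hPmarg k, hQmarg k, ← add_smul, hsum, one_smul]
  · rw [integral_add_measure
      ((integrable_martTestIntegrand hmom hPmarg).smul_measure ENNReal.ofReal_ne_top)
      ((integrable_martTestIntegrand hmom hQmarg).smul_measure ENNReal.ofReal_ne_top),
      integral_smul_measure, integral_smul_measure, ENNReal.toReal_ofReal ha.1,
      ENNReal.toReal_ofReal hb, smul_eq_mul, smul_eq_mul]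
    calc a * ∫ ω, martTestIntegrand k hk h ω ∂P + (1 - a) * ∫ ω, martTestIntegrand k hk h ω ∂Q
        ≤ a * (ε * ‖h‖) + (1 - a) * (ε * ‖h‖) :=
          add_le_add (mul_le_mul_of_nonneg_left (hPmart k hk h) ha.1)
            (mul_le_mul_of_nonneg_left (hQmart k hk h) hb)
      _ = ε * ‖h‖ := by ring

lemma isClosed_setOf_isApproxMart {ε : ℝ} (hprob : ∀ k, IsProbabilityMeasure (μs k))
    (hmom : ∀ k, Integrable (fun x : Vec d => l1 x) (μs k)) :
    IsClosed {P : ProbabilityMeasure (Traj N d) | IsApproxMart ε μs P} := by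
  set T := {P : ProbabilityMeasure (Traj N d) | ∀ k, P.toMeasure.map (fun ω => ω k) = μs k}
  have hT : IsClosed T := by
    convert isClosed_iInter fun k => isClosed_setOf_map_eq (continuous_apply k) ⟨μs k, hprob k⟩
    ext P
    simp [T]
  have hclosed : ∀ (k : ℕ) (hk : k + 1 < N)
      (h : BoundedContinuousFunction (Fin (k+1) → Vec d) (Vec d)),
      IsClosed (T ∩ (fun P : ProbabilityMeasure (Traj N d) =>
        ∫ ω, martTestIntegrand k hk h ω ∂(P : Measure (Traj N d))) ⁻¹' Iic (ε * ‖h‖)) :=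
    fun k hk h =>
      (continuousOn_integral_of_abs_le_sum_eval (fun j => (hmom j).const_mul ‖h‖)
        continuous_martTestIntegrand abs_martTestIntegrand_le).preimage_isClosed_of_isClosed
        hT isClosed_Iic
  convert hT.inter (isClosed_iInter fun k => isClosed_iInter fun hk =>
    isClosed_iInter fun h => hclosed k hk h) using 1
  ext P
  have hP : IsProbabilityMeasure (P : Measure (Traj N d)) := inferInstance
  simp only [mem_ofPred_eq, isApproxMart_iff, T, hP, true_and, mem_inter_iff, mem_iInter,
    mem_preimage, mem_Iic]
  exact ⟨fun ⟨hmarg, hmart⟩ => ⟨hmarg, fun k hk h => ⟨hmarg, hmart k hk h⟩⟩,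
    fun ⟨hmarg, hmart⟩ => ⟨hmarg, fun k hk h => (hmart k hk h).2⟩⟩

lemma isTightMeasureSet_setOf_isApproxMart {ε : ℝ} (hprob : ∀ k, IsProbabilityMeasure (μs k)) :
    IsTightMeasureSet {P : Measure (Traj N d) | IsApproxMart ε μs P} :=
  isTightMeasureSet_of_forall_map_eval fun k =>
    isTightMeasureSet_singleton.subset (by rintro _ ⟨P, hP, rfl⟩; exact hP.2.1 k)

end ApproxMart

theorem approxMart_convex_and_compact_general {N d : ℕ} (ε : ℝ)
    (μs : Fin N → Measure (Vec d))
    (hprob : ∀ k, IsProbabilityMeasure (μs k))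
    (hmom : ∀ k, Integrable (fun x : Vec d => l1 x) (μs k)) :
    (∀ P Q : Measure (Traj N d), IsApproxMart ε μs P → IsApproxMart ε μs Q →
      ∀ a : ℝ, a ∈ Set.Icc (0 : ℝ) 1 →
        IsApproxMart ε μs (ENNReal.ofReal a • P + ENNReal.ofReal (1 - a) • Q)) ∧
    IsCompact {P : ProbabilityMeasure (Traj N d) | IsApproxMart ε μs P.toMeasure} := by
  refine ⟨fun P Q hP hQ a ha => hP.smul_add_smul hmom hQ ha, ?_⟩
  rw [← (isClosed_setOf_isApproxMart hprob hmom).closure_eq]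
  exact isCompact_closure_of_isTightMeasureSet
    ((isTightMeasureSet_setOf_isApproxMart hprob).subset (by rintro _ ⟨P, hP, rfl⟩; exact hP))

theorem approxMart_convex_and_compact {N d : ℕ} (hN : 2 ≤ N) (hd : 1 ≤ d) (ε : ℝ) (hε : 0 ≤ ε)
    (μs : Fin N → Measure (Vec d))
    (hprob : ∀ k, IsProbabilityMeasure (μs k))
    (hmom : ∀ k, Integrable (fun x : Vec d => l1 x) (μs k)) :
    (∀ P Q : Measure (Traj N d), IsApproxMart ε μs P → IsApproxMart ε μs Q →
      ∀ a : ℝ, a ∈ Set.Icc (0 : ℝ) 1 →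
        IsApproxMart ε μs (ENNReal.ofReal a • P + ENNReal.ofReal (1 - a) • Q)) ∧
    IsCompact {P : ProbabilityMeasure (Traj N d) | IsApproxMart ε μs P.toMeasure} :=
  approxMart_convex_and_compact_general ε μs hprob hmom
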